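/- arXiv:2509.19829 — 4 statements merged into one kernel-verified Lean document; each statement's English description precedes it below -/
import Mathlib

section
/- Let B be a Blaschke product with Property 𝔅 and let δ ∈ (0,1). Let Ω₀ be a connected component of the level set Ω_{B,δ} = {z ∈ 𝔻 : |B(z)| < δ}. Then B maps the closure of Ω₀ onto the closed disk {w ∈ ℂ : |w| ≤ δ}, and B maps the boundary ∂Ω₀ onto the circle {w ∈ ℂ : |w| = δ}. -/
noncomputable section

/-- The level set Ω_{f,θ} = {z ∈ 𝔻 : |f(z)| < θ}. -/
def levelSet (f : ℂ → ℂ) (θ : ℝ) : Set ℂ :=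
  {z : ℂ | ‖z‖ < 1 ∧ ‖f z‖ < θ}

/-- An inner function: holomorphic and bounded by 1 on 𝔻, with radial limits of modulus 1 a.e. -/
def IsInner (u : ℂ → ℂ) : Prop :=
  DifferentiableOn ℂ u (Metric.ball (0:ℂ) 1) ∧
  (∀ z ∈ Metric.ball (0:ℂ) 1, ‖u z‖ ≤ 1) ∧
  (∀ᵐ θ : ℝ ∂MeasureTheory.volume,
    Filter.Tendsto
      (fun r : ℝ => ‖u ((r : ℂ) * Complex.exp ((θ : ℂ) * Complex.I))‖)
      (nhdsWithin 1 (Set.Iio 1)) (nhds 1))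

/-- The pseudo-hyperbolic distance on 𝔻. -/
def pseudoDist (z w : ℂ) : ℝ :=
  ‖z - w‖ / ‖1 - (starRingEnd ℂ) z * w‖

/-- δ_{u,η} : sup of pseudo-hyperbolic distances of pairs lying in a common component of Ω_{u,η}. -/
def deltaLevel (u : ℂ → ℂ) (η : ℝ) : ℝ :=
  sSup {d : ℝ | ∃ z₁ z₂ : ℂ, z₁ ∈ levelSet u η ∧
    z₂ ∈ connectedComponentIn (levelSet u η) z₁ ∧ d = pseudoDist z₁ z₂}

/-- Property 𝔅. -/
def PropertyB (u : ℂ → ℂ) : Prop :=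
  ∀ θ ∈ Set.Ioo (0:ℝ) 1, ∀ z ∈ levelSet u θ,
    closure (connectedComponentIn (levelSet u θ) z) ⊆ Metric.ball (0:ℂ) 1

/-- θ-weak Property 𝔅. -/
def WeakPropertyBAt (u : ℂ → ℂ) (θ : ℝ) : Prop :=
  θ ∈ Set.Ioo (0:ℝ) 1 ∧ ∀ z ∈ levelSet u θ,
    closure (connectedComponentIn (levelSet u θ) z) ⊆ Metric.ball (0:ℂ) 1

/-- η-weak Property 𝔥. -/
def WeakPropertyHAt (u : ℂ → ℂ) (η : ℝ) : Prop :=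
  WeakPropertyBAt u η ∧ deltaLevel u η < 1

/-- Supremum norm over the unit disk. -/
def supNormD (f : ℂ → ℂ) : ℝ :=
  ⨆ z : (Metric.ball (0:ℂ) 1), ‖f (z : ℂ)‖

/-- A Blaschke product. -/
def IsBlaschkeProduct (B : ℂ → ℂ) : Prop :=
  ∃ (ι : Type) (_ : Countable ι) (m : ℕ) (lam : ℂ) (α : ι → ℂ),
    ‖lam‖ = 1 ∧
    (∀ n, ‖α n‖ < 1 ∧ α n ≠ 0) ∧
    (Summable fun n => 1 - ‖α n‖) ∧
    ∀ z ∈ Metric.ball (0:ℂ) 1,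
      B z = lam * z ^ m *
        ∏' n, ((‖α n‖ : ℂ) / α n) * ((α n - z) / (1 - (starRingEnd ℂ) (α n) * z))

/-- Order of vanishing (multiplicity of zero) via iterated derivatives. -/
def zeroOrder (f : ℂ → ℂ) (z : ℂ) : ℕ :=
  sInf {n : ℕ | iteratedDeriv n f z ≠ 0}

/-!
Each factor of a Blaschke product satisfies `‖b_a z - 1‖ ≤ (1 - ‖a‖) (1 + r) / (1 - r)` for
`‖z‖ ≤ r < 1`, so the product converges locally uniformly and `B` is holomorphic on `𝔻`.

Let `Ω` be a component of `{‖B‖ < δ}` with `closure Ω ⊆ 𝔻`. A point of `∂Ω` with `‖B‖ < δ`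
would lie in the component `Ω` itself, so `‖B‖ = δ` on `∂Ω`; in particular `B` is not constant
on `Ω` and `B '' Ω` is open. By compactness `B '' closure Ω = closure (B '' Ω)`, and this set meets
the disc `‖w‖ < δ` only in `B '' Ω`; connectedness of the disc gives `ball 0 δ ⊆ B '' Ω`. Taking
closures yields the closed disc, and the circle `‖w‖ = δ` can only be attained on `∂Ω`.
-/

open Metric Set ComplexConjugate

def blaschkeFactor (a z : ℂ) : ℂ :=
  (‖a‖ : ℂ) / a * ((a - z) / (1 - conj a * z))

lemma one_sub_norm_le_norm_one_sub_conj_mul {a z : ℂ} (ha : ‖a‖ ≤ 1) :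
    1 - ‖z‖ ≤ ‖1 - conj a * z‖ := by
  have h : ‖conj a * z‖ ≤ ‖z‖ := by
    rw [norm_mul, RCLike.norm_conj]
    exact mul_le_of_le_one_left (norm_nonneg z) ha
  have := norm_sub_norm_le (1 : ℂ) (conj a * z)
  rw [norm_one] at this
  linarith

lemma one_sub_conj_mul_ne_zero {a z : ℂ} (ha : ‖a‖ ≤ 1) (hz : ‖z‖ < 1) :
    1 - conj a * z ≠ 0 := by
  intro h
  have := one_sub_norm_le_norm_one_sub_conj_mul (z := z) ha
  rw [h, norm_zero] at this
  linarith

lemma blaschkeFactor_sub_one {a z : ℂ} (ha : a ≠ 0) (hden : 1 - conj a * z ≠ 0) :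
    blaschkeFactor a z - 1 = ((‖a‖ : ℂ) - 1) * (a + ‖a‖ * z) / (a * (1 - conj a * z)) := by
  have hconj : a * conj a = (‖a‖ : ℂ) ^ 2 := Complex.mul_conj' a
  have hden' : 1 - z * conj a ≠ 0 := by rwa [mul_comm]
  rw [blaschkeFactor]
  field_simp
  linear_combination z * hconj

lemma norm_blaschkeFactor_sub_one_le {a z : ℂ} {r : ℝ} (ha₀ : a ≠ 0) (ha : ‖a‖ ≤ 1)
    (hz : ‖z‖ ≤ r) (hr : r < 1) :
    ‖blaschkeFactor a z - 1‖ ≤ (1 - ‖a‖) * ((1 + r) / (1 - r)) := by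
  have hnum : ‖a + ‖a‖ * z‖ ≤ ‖a‖ * (1 + r) := by
    calc ‖a + ‖a‖ * z‖ ≤ ‖a‖ + ‖a‖ * ‖z‖ := by
          simpa [norm_mul] using norm_add_le a ((‖a‖ : ℂ) * z)
      _ ≤ ‖a‖ * (1 + r) := by nlinarith [norm_nonneg a]
  have hden : 1 - r ≤ ‖1 - conj a * z‖ :=
    (one_sub_norm_le_norm_one_sub_conj_mul ha).trans' (by linarith)
  have ha' : 0 < ‖a‖ := norm_pos_iff.2 ha₀
  have h1a : ‖(‖a‖ : ℂ) - 1‖ = 1 - ‖a‖ := by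
    rw [← Complex.ofReal_one, ← Complex.ofReal_sub, Complex.norm_real, Real.norm_eq_abs,
      abs_of_nonpos (by linarith)]
    ring
  rw [blaschkeFactor_sub_one ha₀ (one_sub_conj_mul_ne_zero ha (hz.trans_lt hr)), norm_div,
    norm_mul, norm_mul, h1a, mul_div_assoc]
  refine mul_le_mul_of_nonneg_left ?_ (by linarith)
  calc ‖a + ‖a‖ * z‖ / (‖a‖ * ‖1 - conj a * z‖) ≤ ‖a‖ * (1 + r) / (‖a‖ * (1 - r)) := by
        gcongr
        exact mul_nonneg ha'.le (by linarith [norm_nonneg z])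
    _ = (1 + r) / (1 - r) := mul_div_mul_left _ _ ha'.ne'

lemma differentiableOn_blaschkeFactor {a : ℂ} (ha : ‖a‖ ≤ 1) :
    DifferentiableOn ℂ (blaschkeFactor a) (ball 0 1) := by
  intro z hz
  have := one_sub_conj_mul_ne_zero ha (mem_ball_zero_iff.1 hz)
  unfold blaschkeFactor
  fun_prop (disch := assumption)

lemma differentiableOn_tprod_blaschkeFactor {ι : Type*} {α : ι → ℂ} (hα₀ : ∀ n, α n ≠ 0)
    (hα₁ : ∀ n, ‖α n‖ ≤ 1) (hsum : Summable fun n => 1 - ‖α n‖) :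
    DifferentiableOn ℂ (fun z => ∏' n, blaschkeFactor (α n) z) (ball 0 1) := by
  refine differentiableOn_of_locally_differentiableOn fun z hz => ?_
  have hz : ‖z‖ < 1 := mem_ball_zero_iff.1 hz
  obtain ⟨r, hzr, hr⟩ := exists_between hz
  refine ⟨ball 0 r, isOpen_ball, mem_ball_zero_iff.2 hzr, ?_⟩
  rw [inter_eq_right.2 (ball_subset_ball hr.le)]
  have hprod := Summable.hasProdLocallyUniformlyOn_one_add isOpen_ball
    (hsum.mul_right ((1 + r) / (1 - r)))
    (f := fun n w => blaschkeFactor (α n) w - 1)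
    (.of_forall fun n w hw => norm_blaschkeFactor_sub_one_le (hα₀ n) (hα₁ n)
      (mem_ball_zero_iff.1 hw).le hr)
    (fun n => ((differentiableOn_blaschkeFactor (hα₁ n)).mono
      (ball_subset_ball hr.le)).continuousOn.sub continuousOn_const)
  simp only [add_sub_cancel] at hprod
  refine hprod.differentiableOn (.of_forall fun s => ?_) isOpen_ball
  exact DifferentiableOn.fun_finsetProd fun n _ =>
    (differentiableOn_blaschkeFactor (hα₁ n)).mono (ball_subset_ball hr.le)

lemma IsBlaschkeProduct.differentiableOn {B : ℂ → ℂ} (hB : IsBlaschkeProduct B) :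
    DifferentiableOn ℂ B (ball 0 1) := by
  obtain ⟨ι, -, m, lam, α, -, hα, hsum, hBeq⟩ := hB
  refine DifferentiableOn.congr ?_ hBeq
  exact ((differentiableOn_const lam).mul (differentiable_pow m).differentiableOn).mul
    (differentiableOn_tprod_blaschkeFactor (fun n => (hα n).2) (fun n => (hα n).1.le) hsum)

theorem closure_connectedComponentIn_inter_subset {X : Type*} [TopologicalSpace X] (F : Set X)
    (x : X) : closure (connectedComponentIn F x) ∩ F ⊆ connectedComponentIn F x := by
  rintro z ⟨hzC, hzF⟩
  have hx : x ∈ F := connectedComponentIn_nonempty_iff.1 (closure_nonempty_iff.1 ⟨z, hzC⟩)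
  have hpre : IsPreconnected (insert z (connectedComponentIn F x)) :=
    isPreconnected_connectedComponentIn.subset_closure (subset_insert _ _)
      (insert_subset hzC subset_closure)
  exact hpre.subset_connectedComponentIn (mem_insert_of_mem _ (mem_connectedComponentIn hx))
    (insert_subset hzF (connectedComponentIn_subset _ _)) (mem_insert _ _)

theorem IsOpen.notMem_of_mem_frontier_connectedComponentIn {X : Type*} [TopologicalSpace X]
    {F : Set X} {x z : X} (hF : IsOpen (connectedComponentIn F x))
    (hz : z ∈ frontier (connectedComponentIn F x)) : z ∉ F := fun hzF =>
  hF.inter_frontier_eq.subset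
    ⟨closure_connectedComponentIn_inter_subset F x ⟨frontier_subset_closure hz, hzF⟩, hz⟩

section LevelSetComponent

variable {f : ℂ → ℂ} {δ : ℝ} {z₀ : ℂ}

lemma isOpen_levelSet (hf : ContinuousOn f (ball 0 1)) : IsOpen (levelSet f δ) := by
  have : levelSet f δ = ball 0 1 ∩ f ⁻¹' ball 0 δ := by
    ext z
    simp [levelSet]
  rw [this]
  exact hf.isOpen_inter_preimage isOpen_ball isOpen_ball

lemma image_closure_subset_closedBall_of_subset_levelSet {s : Set ℂ} (hs : s ⊆ levelSet f δ)
    (hf : ContinuousOn f (closure s)) : f '' closure s ⊆ closedBall 0 δ :=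
  calc f '' closure s ⊆ closure (f '' s) := hf.image_closure
    _ ⊆ closure (ball 0 δ) :=
      closure_mono (image_subset_iff.2 fun _ hz => mem_ball_zero_iff.2 (hs hz).2)
    _ ⊆ closedBall 0 δ := closure_ball_subset_closedBall

lemma norm_eq_of_mem_frontier_connectedComponentIn_levelSet (hf : ContinuousOn f (ball 0 1))
    (hcl : closure (connectedComponentIn (levelSet f δ) z₀) ⊆ ball 0 1) {z : ℂ}
    (hz : z ∈ frontier (connectedComponentIn (levelSet f δ) z₀)) : ‖f z‖ = δ := by
  refine le_antisymm ?_ (not_lt.1 fun hlt => ?_)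
  · exact mem_closedBall_zero_iff.1 <| image_closure_subset_closedBall_of_subset_levelSet
      (connectedComponentIn_subset _ _) (hf.mono hcl) ⟨z, frontier_subset_closure hz, rfl⟩
  · exact (isOpen_levelSet hf).connectedComponentIn.notMem_of_mem_frontier_connectedComponentIn
      hz ⟨mem_ball_zero_iff.1 (hcl (frontier_subset_closure hz)), hlt⟩

lemma isOpen_image_connectedComponentIn_levelSet (hf : DifferentiableOn ℂ f (ball 0 1))
    (hz₀ : z₀ ∈ levelSet f δ) (hcl : closure (connectedComponentIn (levelSet f δ) z₀) ⊆ ball 0 1) :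
    IsOpen (f '' connectedComponentIn (levelSet f δ) z₀) := by
  set Ω := connectedComponentIn (levelSet f δ) z₀
  have hΩ : IsOpen Ω := (isOpen_levelSet hf.continuousOn).connectedComponentIn
  have hz₀Ω : z₀ ∈ Ω := mem_connectedComponentIn hz₀
  rcases ((hf.mono (subset_closure.trans hcl)).analyticOnNhd hΩ).is_constant_or_isOpen
    isPreconnected_connectedComponentIn with ⟨w, hw⟩ | hopen
  · -- a constant `f` would have modulus `‖f z₀‖ < δ` on the nonempty frontier of `Ω`
    have hΩ_ne_univ : Ω ≠ univ := fun h => by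
      have := mem_ball_zero_iff.1 (hcl (subset_closure (h ▸ mem_univ (1 : ℂ))))
      norm_num at this
    obtain ⟨y, hy⟩ := nonempty_frontier_iff.2 ⟨⟨z₀, hz₀Ω⟩, hΩ_ne_univ⟩
    have hfΩ : f '' Ω ⊆ {f z₀} := by
      rintro _ ⟨z, hz, rfl⟩
      rw [hw z hz, hw z₀ hz₀Ω, mem_singleton_iff]
    have hfy : f y = f z₀ := by
      have := closure_mono hfΩ <|
        (hf.continuousOn.mono hcl).image_closure ⟨y, frontier_subset_closure hy, rfl⟩
      rwa [closure_singleton, mem_singleton_iff] at this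
    have hy_norm := norm_eq_of_mem_frontier_connectedComponentIn_levelSet hf.continuousOn hcl hy
    exact (hz₀.2.ne (hfy ▸ hy_norm)).elim
  · exact hopen Ω subset_rfl hΩ

lemma image_closure_connectedComponentIn_levelSet_eq (hf : ContinuousOn f (ball 0 1))
    (hcl : closure (connectedComponentIn (levelSet f δ) z₀) ⊆ ball 0 1) :
    f '' closure (connectedComponentIn (levelSet f δ) z₀) =
      closure (f '' connectedComponentIn (levelSet f δ) z₀) :=
  image_closure_of_isCompact (isCompact_of_isClosed_isBounded isClosed_closure
    (isBounded_ball.subset hcl)) (hf.mono hcl)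

lemma ball_subset_image_connectedComponentIn_levelSet (hf : DifferentiableOn ℂ f (ball 0 1))
    (hz₀ : z₀ ∈ levelSet f δ) (hcl : closure (connectedComponentIn (levelSet f δ) z₀) ⊆ ball 0 1) :
    ball 0 δ ⊆ f '' connectedComponentIn (levelSet f δ) z₀ := by
  refine (convex_ball (0 : ℂ) δ).isPreconnected.subset_of_closure_inter_subset
    (isOpen_image_connectedComponentIn_levelSet hf hz₀ hcl)
    ⟨f z₀, mem_ball_zero_iff.2 hz₀.2, z₀, mem_connectedComponentIn hz₀, rfl⟩ ?_
  rintro _ ⟨hw, hwδ⟩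
  rw [← image_closure_connectedComponentIn_levelSet_eq hf.continuousOn hcl,
    closure_eq_self_union_frontier, image_union] at hw
  refine hw.resolve_right ?_
  rintro ⟨z, hz, rfl⟩
  exact (mem_ball_zero_iff.1 hwδ).ne
    (norm_eq_of_mem_frontier_connectedComponentIn_levelSet hf.continuousOn hcl hz)

theorem image_closure_connectedComponentIn_levelSet (hf : DifferentiableOn ℂ f (ball 0 1))
    (hz₀ : z₀ ∈ levelSet f δ) (hcl : closure (connectedComponentIn (levelSet f δ) z₀) ⊆ ball 0 1) :
    f '' closure (connectedComponentIn (levelSet f δ) z₀) = closedBall 0 δ ∧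
      f '' frontier (connectedComponentIn (levelSet f δ) z₀) = sphere 0 δ := by
  set Ω := connectedComponentIn (levelSet f δ) z₀
  have hδ : 0 < δ := (norm_nonneg _).trans_lt hz₀.2
  have hclosure : f '' closure Ω = closedBall 0 δ := by
    refine (image_closure_subset_closedBall_of_subset_levelSet (connectedComponentIn_subset _ _)
      (hf.continuousOn.mono hcl)).antisymm ?_
    rw [← closure_ball 0 hδ.ne', image_closure_connectedComponentIn_levelSet_eq hf.continuousOn hcl]
    exact closure_mono (ball_subset_image_connectedComponentIn_levelSet hf hz₀ hcl)
  refine ⟨hclosure, subset_antisymm ?_ fun w hw => ?_⟩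
  · rintro _ ⟨z, hz, rfl⟩
    exact mem_sphere_zero_iff_norm.2
      (norm_eq_of_mem_frontier_connectedComponentIn_levelSet hf.continuousOn hcl hz)
  · obtain ⟨z, hz, rfl⟩ := hclosure ▸ sphere_subset_closedBall hw
    rw [closure_eq_self_union_frontier] at hz
    refine ⟨z, hz.resolve_left fun hzΩ => ?_, rfl⟩
    exact (connectedComponentIn_subset _ _ hzΩ).2.ne (mem_sphere_zero_iff_norm.1 hw)

end LevelSetComponent

/-- For a Blaschke product with Property 𝔅, B maps the closure of each component of a level
set onto the closed disk of radius δ, and the boundary onto the circle of radius δ. -/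
theorem stmt1 (B : ℂ → ℂ) (hB : IsBlaschkeProduct B) (hPB : PropertyB B)
    (δ : ℝ) (hδ : δ ∈ Set.Ioo (0:ℝ) 1)
    (Ω₀ : Set ℂ) (hΩ₀ : ∃ z ∈ levelSet B δ, Ω₀ = connectedComponentIn (levelSet B δ) z) :
    B '' closure Ω₀ = Metric.closedBall (0:ℂ) δ ∧
    B '' frontier Ω₀ = Metric.sphere (0:ℂ) δ := by
  obtain ⟨z, hz, rfl⟩ := hΩ₀
  exact image_closure_connectedComponentIn_levelSet hB.differentiableOn hz (hPB δ hδ z hz)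

end
end

section
/- The set of inner functions with weak Property 𝔥 is open in the space of all inner functions with the supremum norm: for every inner function u with weak Property 𝔥 there exists ε > 0 such that every inner function v with ‖v − u‖_∞ < ε (where ‖f‖_∞ = sup_{z∈𝔻} |f(z)|) also has weak Property 𝔥. -/
noncomputable section

/-! If `‖v - u‖_∞ < η / 2` then `Ω_{v,η/2} ⊆ Ω_{u,η}`. Both conditions of weak Property 𝔥 pass
from a level set to a smaller one: each component of the smaller set lies in a component of the
larger, so its closure stays in `𝔻` and its pseudo-hyperbolic diameter can only shrink. Hence `v`
has weak Property 𝔥 at level `η / 2`. -/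

theorem sq_norm_one_sub_conj_mul (z w : ℂ) :
    ‖1 - (starRingEnd ℂ) z * w‖ ^ 2 = ‖z - w‖ ^ 2 + (1 - ‖z‖ ^ 2) * (1 - ‖w‖ ^ 2) := by
  simp only [Complex.sq_norm, Complex.normSq_apply, Complex.sub_re, Complex.sub_im,
    Complex.mul_re, Complex.mul_im, Complex.one_re, Complex.one_im, Complex.conj_re,
    Complex.conj_im]
  ring

theorem pseudoDist_nonneg (z w : ℂ) : 0 ≤ pseudoDist z w := by
  unfold pseudoDist
  positivity

theorem pseudoDist_le_one {z w : ℂ} (hz : ‖z‖ < 1) (hw : ‖w‖ < 1) : pseudoDist z w ≤ 1 := by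
  have hsq : ‖z - w‖ ^ 2 ≤ ‖1 - (starRingEnd ℂ) z * w‖ ^ 2 := by
    rw [sq_norm_one_sub_conj_mul]
    have : 0 ≤ (1 - ‖z‖ ^ 2) * (1 - ‖w‖ ^ 2) := by
      apply mul_nonneg <;> nlinarith [norm_nonneg z, norm_nonneg w]
    linarith
  exact div_le_one_of_le₀ ((sq_le_sq₀ (norm_nonneg _) (norm_nonneg _)).1 hsq) (norm_nonneg _)

theorem deltaLevel_nonneg (u : ℂ → ℂ) (η : ℝ) : 0 ≤ deltaLevel u η :=
  Real.sSup_nonneg fun _ ⟨z₁, z₂, _, _, hd⟩ => hd ▸ pseudoDist_nonneg z₁ z₂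

theorem deltaLevel_mono {u v : ℂ → ℂ} {θ η : ℝ} (h : levelSet v θ ⊆ levelSet u η) :
    deltaLevel v θ ≤ deltaLevel u η := by
  rcases Set.eq_empty_or_nonempty {d : ℝ | ∃ z₁ z₂ : ℂ, z₁ ∈ levelSet v θ ∧
      z₂ ∈ connectedComponentIn (levelSet v θ) z₁ ∧ d = pseudoDist z₁ z₂} with hempty | hne
  · rw [deltaLevel, hempty, Real.sSup_empty]
    exact deltaLevel_nonneg u η
  · refine csSup_le_csSup ⟨1, ?_⟩ hne ?_
    · rintro _ ⟨z₁, z₂, hz₁, hz₂, rfl⟩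
      exact pseudoDist_le_one hz₁.1 (connectedComponentIn_subset _ _ hz₂).1
    · rintro _ ⟨z₁, z₂, hz₁, hz₂, rfl⟩
      exact ⟨z₁, z₂, h hz₁, connectedComponentIn_mono z₁ h hz₂, rfl⟩

theorem WeakPropertyBAt.of_levelSet_subset {u v : ℂ → ℂ} {θ η : ℝ} (hu : WeakPropertyBAt u η)
    (hθ : θ ∈ Set.Ioo (0 : ℝ) 1) (h : levelSet v θ ⊆ levelSet u η) : WeakPropertyBAt v θ :=
  ⟨hθ, fun z hz => (closure_mono (connectedComponentIn_mono z h)).trans (hu.2 z (h hz))⟩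

theorem WeakPropertyHAt.of_levelSet_subset {u v : ℂ → ℂ} {θ η : ℝ} (hu : WeakPropertyHAt u η)
    (hθ : θ ∈ Set.Ioo (0 : ℝ) 1) (h : levelSet v θ ⊆ levelSet u η) : WeakPropertyHAt v θ :=
  ⟨hu.1.of_levelSet_subset hθ h, (deltaLevel_mono h).trans_lt hu.2⟩

theorem levelSet_subset_levelSet_add {u v : ℂ → ℂ} {ε : ℝ}
    (hvu : ∀ z : ℂ, ‖z‖ < 1 → ‖v z - u z‖ < ε) (θ : ℝ) :
    levelSet v θ ⊆ levelSet u (θ + ε) := fun z ⟨hz, hvz⟩ =>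
  ⟨hz, (norm_le_norm_add_norm_sub (v z) (u z)).trans_lt (add_lt_add hvz (hvu z hz))⟩

theorem norm_le_supNormD {f : ℂ → ℂ} {C : ℝ} (hf : ∀ z ∈ Metric.ball (0 : ℂ) 1, ‖f z‖ ≤ C)
    {z : ℂ} (hz : z ∈ Metric.ball (0 : ℂ) 1) : ‖f z‖ ≤ supNormD f :=
  le_ciSup (f := fun w : Metric.ball (0 : ℂ) 1 => ‖f w‖) ⟨C, by rintro _ ⟨w, rfl⟩; exact hf w w.2⟩
    ⟨z, hz⟩

/-- The set of inner functions with weak Property 𝔥 is open for the sup norm. -/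
theorem stmt10 (u : ℂ → ℂ) (hu : IsInner u) (hWH : ∃ η, WeakPropertyHAt u η) :
    ∃ ε > 0, ∀ v : ℂ → ℂ, IsInner v →
      supNormD (fun z => v z - u z) < ε → ∃ η, WeakPropertyHAt v η := by
  obtain ⟨η, hη⟩ := hWH
  obtain ⟨hη0, hη1⟩ := hη.1.1
  refine ⟨η / 2, half_pos hη0, fun v hv hvu =>
    ⟨η / 2, hη.of_levelSet_subset ⟨half_pos hη0, by linarith⟩ ?_⟩⟩
  -- `supNormD` is a junk `0` for unbounded functions; `|u|, |v| ≤ 1` makes it a true bound.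
  have hclose : ∀ z : ℂ, ‖z‖ < 1 → ‖v z - u z‖ < η / 2 := fun z hz =>
    (norm_le_supNormD (fun w hw => (norm_sub_le _ _).trans (add_le_add (hv.2.1 w hw) (hu.2.1 w hw)))
      (mem_ball_zero_iff.2 hz)).trans_lt hvu
  simpa only [add_halves] using levelSet_subset_levelSet_add hclose (η / 2)
end
end

section
/- Let x ∈ (0,1) and y > 1. Then (1 − x)/(1 − x^{1/y}) < y, and moreover ((1 + x^{1/y})/(1 − x^{1/y}))·((1 − x)/(1 + x)) < y². -/
/-!
Put t = x^{1/y}, so that x = t^y with 0 < x ≤ t < 1. Bernoulli's inequality t^y > 1 + y(t - 1)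
is the first bound. The product in the second bound equals ((1 - x)/(1 - t))² · (1 - t²)/(1 - x²),
and the last factor is at most 1 because x ≤ t, so the second bound follows from the first.
-/

noncomputable section

theorem one_sub_rpow_lt_mul_one_sub {t y : ℝ} (ht : 0 ≤ t) (ht1 : t ≠ 1) (hy : 1 < y) :
    1 - t ^ y < y * (1 - t) := by
  have hbernoulli :=
    one_add_mul_self_lt_rpow_one_add (s := t - 1) (by linarith) (sub_ne_zero.2 ht1) hy
  rw [add_sub_cancel] at hbernoulli
  linarith

theorem one_add_div_one_sub_mul_one_sub_div_one_add_le_sq {x t : ℝ} (hx : 0 ≤ x) (hxt : x ≤ t)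
    (ht : t < 1) : (1 + t) / (1 - t) * ((1 - x) / (1 + x)) ≤ ((1 - x) / (1 - t)) ^ 2 := by
  have h1t : 0 < 1 - t := by linarith
  rw [div_mul_div_comm, div_pow, div_le_div_iff₀ (by positivity) (by positivity)]
  -- after cancelling `(1 - x) * (1 - t)`, this is `1 - t ^ 2 ≤ 1 - x ^ 2`
  have key : (1 + t) * (1 - t) ≤ (1 - x) * (1 + x) := by nlinarith
  have hpos : 0 ≤ (1 - x) * (1 - t) := mul_nonneg (by linarith) h1t.le
  nlinarith [mul_le_mul_of_nonneg_left key hpos]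

/-- For x ∈ (0,1) and y > 1: (1-x)/(1-x^{1/y}) < y and
((1+x^{1/y})/(1-x^{1/y}))·((1-x)/(1+x)) < y². -/
theorem stmt13 (x y : ℝ) (hx : x ∈ Set.Ioo (0:ℝ) 1) (hy : 1 < y) :
    (1 - x) / (1 - x ^ (1/y)) < y ∧
    ((1 + x ^ (1/y)) / (1 - x ^ (1/y))) * ((1 - x) / (1 + x)) < y ^ 2 := by
  obtain ⟨hx0, hx1⟩ := hx
  have hxt : x = (x ^ (1/y)) ^ y := by
    rw [one_div, Real.rpow_inv_rpow hx0.le (by linarith : 0 < y).ne']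
  set t := x ^ (1/y)
  have ht0 : 0 ≤ t := by positivity
  have ht1 : t < 1 := Real.rpow_lt_one hx0.le hx1 (by positivity)
  have hA : (1 - x) / (1 - t) < y := by
    rw [div_lt_iff₀ (by linarith), hxt]
    exact one_sub_rpow_lt_mul_one_sub ht0 ht1.ne hy
  refine ⟨hA, ?_⟩
  calc (1 + t) / (1 - t) * ((1 - x) / (1 + x)) ≤ ((1 - x) / (1 - t)) ^ 2 :=
        one_add_div_one_sub_mul_one_sub_div_one_add_le_sq hx0.le
          (hxt ▸ Real.rpow_le_self_of_le_one ht0 ht1.le hy.le) ht1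
    _ < y ^ 2 := by gcongr

end
end

section
/- Let δ₀ ∈ (0, 1/e), and set γ = 1 + 2/√(−ln δ₀) and δ = δ₀^{1 − 1/√(−ln δ₀)}. For all x, y, z in the open unit disk 𝔻, if ρ(x,y) ≤ δ₀ and ρ(x,z) ≥ δ, then ρ(y,z) ≥ ρ(x,z)^γ. -/
noncomputable section

/-!
The map `φₓ w = (w - x) / (1 - x̄ w)` preserves `ρ` and `‖φₓ w‖ = ρ(x, w)`. Combined with
`ρ(a, b) ≥ (‖b‖ - ‖a‖) / (1 - ‖a‖ ‖b‖)` this gives, for `r = ρ(x, z)` and `d = ρ(x, y)`,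
`ρ(y, z) ≥ (r - d) / (1 - d r) ≥ (r - δ₀) / (1 - δ₀ r)`, the right side decreasing in `d`.
For the real inequality put `s = √(-log δ₀)`: then `δ = δ₀ eˢ ≥ δ₀ (1 + s)`, so `δ₀ s ≤ r - δ₀`,
and `r^(2/s) ≤ 1 / (1 + 2L/s)` with `L = -log r ≥ 1 - r`; hence
`r^γ (1 - δ₀ r) ≤ r (1 - δ₀ r) / (1 + 2L/s) ≤ r - δ₀` since `δ₀ (1 - r²) ≤ 2 L δ₀ ≤ 2 L (r - δ₀) / s`.
-/

open ComplexConjugate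

section PseudoDist

variable {a b : ℂ}

theorem norm_one_sub_conj_mul_sq (a b : ℂ) :
    ‖1 - conj a * b‖ ^ 2 = ‖a - b‖ ^ 2 + (1 - ‖a‖ ^ 2) * (1 - ‖b‖ ^ 2) := by
  simp only [Complex.sq_norm, Complex.normSq_apply, Complex.sub_re, Complex.sub_im,
    Complex.mul_re, Complex.mul_im, Complex.conj_re, Complex.conj_im, Complex.one_re,
    Complex.one_im]
  ring

theorem one_sub_norm_mul_norm_le (a b : ℂ) : 1 - ‖a‖ * ‖b‖ ≤ ‖1 - conj a * b‖ := by
  simpa only [norm_one, norm_mul, Complex.norm_conj] using norm_sub_norm_le (1 : ℂ) (conj a * b)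

theorem norm_one_sub_conj_mul_pos (ha : ‖a‖ < 1) (hb : ‖b‖ < 1) : 0 < ‖1 - conj a * b‖ := by
  have : ‖a‖ * ‖b‖ < 1 := by nlinarith [norm_nonneg a, norm_nonneg b]
  linarith [one_sub_norm_mul_norm_le a b]

theorem pseudoDist_nonneg_s15 (a b : ℂ) : 0 ≤ pseudoDist a b := by
  unfold pseudoDist; positivity

theorem pseudoDist_lt_one (ha : ‖a‖ < 1) (hb : ‖b‖ < 1) : pseudoDist a b < 1 := by
  have hD := norm_one_sub_conj_mul_pos ha hb
  rw [pseudoDist, div_lt_one hD]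
  refine lt_of_pow_lt_pow_left₀ 2 hD.le ?_
  rw [norm_one_sub_conj_mul_sq]
  have : 0 < (1 - ‖a‖ ^ 2) * (1 - ‖b‖ ^ 2) := by
    apply mul_pos <;> nlinarith [norm_nonneg a, norm_nonneg b]
  linarith

theorem norm_sub_norm_div_le_pseudoDist (ha : ‖a‖ < 1) (hb : ‖b‖ < 1) :
    (‖b‖ - ‖a‖) / (1 - ‖a‖ * ‖b‖) ≤ pseudoDist a b := by
  have hAB : 0 < 1 - ‖a‖ * ‖b‖ := by nlinarith [norm_nonneg a, norm_nonneg b]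
  have hD := norm_one_sub_conj_mul_pos ha hb
  have hc : 0 ≤ (1 - ‖a‖ ^ 2) * (1 - ‖b‖ ^ 2) := by
    apply mul_nonneg <;> nlinarith [norm_nonneg a, norm_nonneg b]
  refine le_of_sq_le_sq ?_ (pseudoDist_nonneg_s15 a b)
  calc ((‖b‖ - ‖a‖) / (1 - ‖a‖ * ‖b‖)) ^ 2
      = 1 - (1 - ‖a‖ ^ 2) * (1 - ‖b‖ ^ 2) / (1 - ‖a‖ * ‖b‖) ^ 2 := by
        rw [div_pow, eq_sub_iff_add_eq, ← add_div, div_eq_one_iff_eq (by positivity)]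
        ring
    _ ≤ 1 - (1 - ‖a‖ ^ 2) * (1 - ‖b‖ ^ 2) / ‖1 - conj a * b‖ ^ 2 := by
        gcongr; exact one_sub_norm_mul_norm_le a b
    _ = pseudoDist a b ^ 2 := by
        rw [pseudoDist, div_pow, eq_div_iff (by positivity), sub_mul,
          div_mul_cancel₀ _ (by positivity), norm_one_sub_conj_mul_sq]
        ring

end PseudoDist

def moebius (x w : ℂ) : ℂ :=
  (w - x) / (1 - conj x * w)

section Moebius

variable {x y z : ℂ}

theorem norm_moebius (x w : ℂ) : ‖moebius x w‖ = pseudoDist x w := by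
  rw [moebius, pseudoDist, norm_div, norm_sub_rev]

theorem pseudoDist_moebius (hx : ‖x‖ < 1) (hy : ‖y‖ < 1) (hz : ‖z‖ < 1) :
    pseudoDist (moebius x y) (moebius x z) = pseudoDist y z := by
  have hxx := (norm_one_sub_conj_mul_pos hx hx).ne'
  have hxy := (norm_one_sub_conj_mul_pos hx hy).ne'
  have hxz := (norm_one_sub_conj_mul_pos hx hz).ne'
  have hxy' : 1 - conj x * y ≠ 0 := norm_ne_zero_iff.mp hxy
  have hxz' : 1 - conj x * z ≠ 0 := norm_ne_zero_iff.mp hxz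
  have hyx' : 1 - conj y * x ≠ 0 := by
    simpa only [map_sub, map_one, map_mul, Complex.conj_conj, mul_comm]
      using (map_ne_zero conj).mpr hxy'
  have hnum : moebius x y - moebius x z =
      (y - z) * (1 - conj x * x) / ((1 - conj x * y) * (1 - conj x * z)) := by
    rw [moebius, moebius, div_sub_div _ _ hxy' hxz']
    ring
  have hden : 1 - conj (moebius x y) * moebius x z =
      (1 - conj x * x) * (1 - conj y * z) / (conj (1 - conj x * y) * (1 - conj x * z)) := by
    simp only [moebius, map_div₀, map_sub, map_one, map_mul, Complex.conj_conj]
    field_simp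
    ring
  rw [pseudoDist, pseudoDist, hnum, hden]
  simp only [norm_div, norm_mul, Complex.norm_conj]
  rw [div_div_div_cancel_right₀ (mul_ne_zero hxy hxz), mul_comm ‖1 - conj x * x‖,
    mul_div_mul_right _ _ hxx]

end Moebius

theorem sub_div_one_sub_mul_le_pseudoDist {x y z : ℂ} (hx : ‖x‖ < 1) (hy : ‖y‖ < 1)
    (hz : ‖z‖ < 1) :
    (pseudoDist x z - pseudoDist x y) / (1 - pseudoDist x y * pseudoDist x z)
      ≤ pseudoDist y z := by
  have hy' : ‖moebius x y‖ < 1 := norm_moebius x y ▸ pseudoDist_lt_one hx hy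
  have hz' : ‖moebius x z‖ < 1 := norm_moebius x z ▸ pseudoDist_lt_one hx hz
  simpa only [norm_moebius, pseudoDist_moebius hx hy hz]
    using norm_sub_norm_div_le_pseudoDist hy' hz'

theorem sub_div_one_sub_mul_le_of_le {r d d' : ℝ} (hd : d ≤ d') (hd' : d' ≤ 1) (hr0 : 0 ≤ r)
    (hr1 : r < 1) :
    (r - d') / (1 - d' * r) ≤ (r - d) / (1 - d * r) := by
  have hd'r : 0 < 1 - d' * r := by nlinarith
  have hdr : 0 < 1 - d * r := by nlinarith
  rw [div_le_div_iff₀ hd'r hdr]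
  nlinarith [mul_nonneg (sub_nonneg.2 hd) (by nlinarith : 0 ≤ 1 - r ^ 2)]

theorem rpow_mul_one_sub_mul_log_le_one {r t : ℝ} (hr0 : 0 < r) :
    r ^ t * (1 - t * Real.log r) ≤ 1 := by
  rw [Real.rpow_def_of_pos hr0, mul_comm (Real.log r)]
  calc Real.exp (t * Real.log r) * (1 - t * Real.log r)
      ≤ Real.exp (t * Real.log r) * Real.exp (-(t * Real.log r)) := by
        gcongr
        linarith [Real.add_one_le_exp (-(t * Real.log r))]
    _ = 1 := by rw [← Real.exp_add, add_neg_cancel, Real.exp_zero]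

theorem mul_one_add_sqrt_neg_log_le_rpow {δ₀ : ℝ} (h0 : 0 < δ₀) (h1 : δ₀ < 1) :
    δ₀ * (1 + √(-Real.log δ₀)) ≤ δ₀ ^ (1 - 1 / √(-Real.log δ₀)) := by
  have hlog : 0 < -Real.log δ₀ := neg_pos.2 (Real.log_neg h0 h1)
  set s := √(-Real.log δ₀)
  have hs : 0 < s := Real.sqrt_pos.2 hlog
  have hs2 : s ^ 2 = -Real.log δ₀ := Real.sq_sqrt hlog.le
  have hexp : δ₀ ^ (1 - 1 / s) = δ₀ * Real.exp s := by
    rw [Real.rpow_def_of_pos h0, ← Real.exp_log h0, ← Real.exp_add, Real.log_exp]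
    congr 1
    field_simp
    linear_combination -hs2
  rw [hexp]
  gcongr
  linarith [Real.add_one_le_exp s]

theorem rpow_one_add_two_div_le {δ₀ r s : ℝ} (h0 : 0 < δ₀) (hs : 0 < s)
    (hr : δ₀ * (1 + s) ≤ r) (hr1 : r ≤ 1) :
    r ^ (1 + 2 / s) ≤ (r - δ₀) / (1 - δ₀ * r) := by
  have hr0 : 0 < r := lt_of_lt_of_le (by positivity) hr
  set L := -Real.log r
  have hL0 : 0 ≤ L := neg_nonneg.2 (Real.log_nonpos hr0.le hr1)
  have hL1 : 1 - r ≤ L := by linarith [Real.log_le_sub_one_of_pos hr0]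
  have hδ₀s : δ₀ * s ≤ r - δ₀ := by linarith
  have hδ₀r : 0 < 1 - δ₀ * r := by nlinarith
  have hpos : 0 < 1 + 2 * L / s := by positivity
  have hpow : r ^ (2 / s) ≤ 1 / (1 + 2 * L / s) := by
    have := rpow_mul_one_sub_mul_log_le_one (t := 2 / s) hr0
    rwa [show 2 / s * Real.log r = -(2 * L / s) by ring, sub_neg_eq_add, ← le_div_iff₀ hpos]
      at this
  have hmain : r * (1 - δ₀ * r) ≤ (r - δ₀) * (1 + 2 * L / s) := by
    have h2L : δ₀ * ((1 - r) * (1 + r)) ≤ 2 * L * ((r - δ₀) / s) :=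
      calc δ₀ * ((1 - r) * (1 + r)) ≤ δ₀ * (2 * L) :=
          mul_le_mul_of_nonneg_left (by nlinarith) h0.le
        _ = 2 * L * δ₀ := by ring
        _ ≤ 2 * L * ((r - δ₀) / s) := by gcongr; rwa [le_div_iff₀ hs]
    calc r * (1 - δ₀ * r) = (r - δ₀) + δ₀ * ((1 - r) * (1 + r)) := by ring
      _ ≤ (r - δ₀) + 2 * L * ((r - δ₀) / s) := by gcongr
      _ = (r - δ₀) * (1 + 2 * L / s) := by ring
  calc r ^ (1 + 2 / s) = r * r ^ (2 / s) := by rw [Real.rpow_add hr0, Real.rpow_one]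
    _ ≤ r * (1 / (1 + 2 * L / s)) := by gcongr
    _ ≤ (r - δ₀) / (1 - δ₀ * r) := by rwa [mul_one_div, div_le_div_iff₀ hpos hδ₀r]

/-- Pseudo-hyperbolic distance perturbation lemma. -/
theorem stmt15 (δ₀ : ℝ) (hδ₀ : δ₀ ∈ Set.Ioo (0:ℝ) (1 / Real.exp 1))
    (γ δ : ℝ)
    (hγ : γ = 1 + 2 / Real.sqrt (-Real.log δ₀))
    (hδ : δ = δ₀ ^ (1 - 1 / Real.sqrt (-Real.log δ₀)))
    (x y z : ℂ)
    (hx : x ∈ Metric.ball (0:ℂ) 1) (hy : y ∈ Metric.ball (0:ℂ) 1)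
    (hz : z ∈ Metric.ball (0:ℂ) 1)
    (hxy : pseudoDist x y ≤ δ₀) (hxz : δ ≤ pseudoDist x z) :
    pseudoDist x z ^ γ ≤ pseudoDist y z := by
  obtain ⟨hδ₀0, hδ₀e⟩ := hδ₀
  have hδ₀1 : δ₀ < 1 :=
    hδ₀e.trans (by rw [div_lt_one (Real.exp_pos 1)]; exact Real.one_lt_exp_iff.2 one_pos)
  rw [mem_ball_zero_iff] at hx hy hz
  have hs : 0 < √(-Real.log δ₀) := Real.sqrt_pos.2 (neg_pos.2 (Real.log_neg hδ₀0 hδ₀1))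
  have hr1 := pseudoDist_lt_one hx hz
  subst hγ hδ
  calc pseudoDist x z ^ (1 + 2 / √(-Real.log δ₀))
      ≤ (pseudoDist x z - δ₀) / (1 - δ₀ * pseudoDist x z) :=
        rpow_one_add_two_div_le hδ₀0 hs
          ((mul_one_add_sqrt_neg_log_le_rpow hδ₀0 hδ₀1).trans hxz) hr1.le
    _ ≤ (pseudoDist x z - pseudoDist x y) / (1 - pseudoDist x y * pseudoDist x z) :=
        sub_div_one_sub_mul_le_of_le hxy hδ₀1.le (pseudoDist_nonneg_s15 x z) hr1
    _ ≤ pseudoDist y z := sub_div_one_sub_mul_le_pseudoDist hx hy hz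

end
end
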